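/- arXiv:2305.08384 — 7 statements merged into one kernel-verified Lean document; each statement's English description precedes it below -/
import Mathlib

section
/- Let F be a field, N, Q positive integers, and fix witness vectors a, b, c ∈ F^N and public data u_q, v_q, w_q ∈ F^N, k_q ∈ F for q = 1,…,Q. The Laurent polynomial 𝒞[Y] = Σ_{i=1}^N (a_i b_i − c_i)(Y^i + Y^{−i}) + Σ_{q=1}^Q (a·u_q + b·v_q + c·w_q − k_q) Y^{q+N} is the zero Laurent polynomial if and only if a_i·b_i = c_i for all 1 ≤ i ≤ N and a·u_q + b·v_q + c·w_q = k_q for all 1 ≤ q ≤ Q. -/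
open LaurentPolynomial

/-!
The monomials `Yⁱ` (`1 ≤ i ≤ N`), `Y⁻ⁱ` (`1 ≤ i ≤ N`) and `Y^{q+N}` (`1 ≤ q ≤ Q`) all have distinct
exponents, so `𝒞[Y]` is a sum of distinct monomials whose coefficients are exactly the constraint
defects `aᵢbᵢ - cᵢ` (each appearing twice) and `a·u_q + b·v_q + c·w_q - k_q`. A Laurent polynomial
vanishes iff all its coefficients do.
-/

theorem LaurentPolynomial.sum_C_mul_T_eq_zero_iff {R ι : Type*} [Semiring R] [Fintype ι]
    {e : ι → ℤ} (he : Function.Injective e) (f : ι → R) :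
    ∑ i, C (f i) * T (e i) = 0 ↔ ∀ i, f i = 0 := by
  classical
  refine ⟨fun h j => ?_, fun h => by simp [h]⟩
  simpa [← single_eq_C_mul_T, Finsupp.finsetSum_apply, Finsupp.single_apply, he.eq_iff] using
    congrArg (fun p : R[T;T⁻¹] => p.coeff (e j)) h

def constraintExponent (N Q : ℕ) : Fin N ⊕ Fin N ⊕ Fin Q → ℤ :=
  Sum.elim (fun i => (i : ℤ) + 1) (Sum.elim (fun i => -((i : ℤ) + 1)) (fun q => (q : ℤ) + 1 + N))

theorem constraintExponent_injective (N Q : ℕ) : Function.Injective (constraintExponent N Q) := by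
  rintro (i | i | q) (j | j | p) h <;>
    simp only [constraintExponent, Sum.elim_inl, Sum.elim_inr, Sum.inl.injEq, Sum.inr.injEq,
      reduceCtorEq] at h ⊢ <;>
    omega

theorem constraint_poly_eq_zero_iff_satisfied_general (F : Type*) [Field F] (N Q : ℕ)
    (a b c : Fin N → F) (u v w : Fin Q → Fin N → F) (k : Fin Q → F) :
    ((∑ i : Fin N, LaurentPolynomial.C (a i * b i - c i) *
          (LaurentPolynomial.T ((i : ℤ) + 1) + LaurentPolynomial.T (-((i : ℤ) + 1)))) +
        (∑ q : Fin Q, LaurentPolynomial.C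
          ((∑ j, a j * u q j) + (∑ j, b j * v q j) + (∑ j, c j * w q j) - k q) *
          LaurentPolynomial.T ((q : ℤ) + 1 + (N : ℤ))) = 0)
      ↔ ((∀ i, a i * b i = c i) ∧
          (∀ q, (∑ j, a j * u q j) + (∑ j, b j * v q j) + (∑ j, c j * w q j) = k q)) := by
  set mulDefect : Fin N → F := fun i => a i * b i - c i
  set linDefect : Fin Q → F := fun q =>
    (∑ j, a j * u q j) + (∑ j, b j * v q j) + (∑ j, c j * w q j) - k q
  have key := sum_C_mul_T_eq_zero_iff (constraintExponent_injective N Q)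
    (Sum.elim mulDefect (Sum.elim mulDefect linDefect))
  simp only [Fintype.sum_sum_type, constraintExponent, Sum.elim_inl, Sum.elim_inr, Sum.forall,
    and_self_left, mulDefect, linDefect, sub_eq_zero] at key
  simpa only [mul_add, Finset.sum_add_distrib, add_assoc] using key

/-- The Laurent polynomial
`𝒞[Y] = Σ_{i=1}^N (aᵢbᵢ - cᵢ)(Yⁱ + Y⁻ⁱ) + Σ_{q=1}^Q (a·u_q + b·v_q + c·w_q - k_q) Y^{q+N}`
is the zero Laurent polynomial iff all multiplicative constraints `aᵢ·bᵢ = cᵢ` and all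
linear constraints `a·u_q + b·v_q + c·w_q = k_q` hold. -/
theorem constraint_poly_eq_zero_iff_satisfied (F : Type*) [Field F] (N Q : ℕ)
    (hN : 0 < N) (hQ : 0 < Q)
    (a b c : Fin N → F) (u v w : Fin Q → Fin N → F) (k : Fin Q → F) :
    ((∑ i : Fin N, LaurentPolynomial.C (a i * b i - c i) *
          (LaurentPolynomial.T ((i : ℤ) + 1) + LaurentPolynomial.T (-((i : ℤ) + 1)))) +
        (∑ q : Fin Q, LaurentPolynomial.C
          ((∑ j, a j * u q j) + (∑ j, b j * v q j) + (∑ j, c j * w q j) - k q) *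
          LaurentPolynomial.T ((q : ℤ) + 1 + (N : ℤ))) = 0)
      ↔ ((∀ i, a i * b i = c i) ∧
          (∀ q, (∑ j, a j * u q j) + (∑ j, b j * v q j) + (∑ j, c j * w q j) = k q)) :=
  constraint_poly_eq_zero_iff_satisfied_general F N Q a b c u v w k
end

section
/- Let F be a field, N, Q positive integers, and fix witness vectors a, b, c ∈ F^N and public data u_q, v_q, w_q ∈ F^N, k_q ∈ F for q = 1,…,Q. Suppose the constraint system 𝒞 is NOT satisfied by (a,b,c), i.e., some multiplicative constraint a_i·b_i = c_i or some linear constraint a·u_q + b·v_q + c·w_q = k_q fails. Then the set of nonzero y ∈ F with 𝒞[y] = 0 has at most 2N + Q elements. (Hence a random challenge y detects an unsatisfied constraint system except with probability at most (2N+Q)/(|F|−1) over nonzero y in a finite field F.) -/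
open Polynomial

/-- If the constraint system is NOT satisfied by `(a, b, c)`, then the set
of nonzero `y ∈ F` at which
`𝒞[y] = Σ_{i=1}^N (aᵢbᵢ - cᵢ)(yⁱ + y⁻ⁱ) + Σ_{q=1}^Q (a·u_q + b·v_q + c·w_q - k_q) y^{q+N}`
vanishes is finite, with at most `2N + Q` elements. -/
theorem constraint_eval_zero_set_card_le (F : Type*) [Field F] (N Q : ℕ)
    (hN : 0 < N) (hQ : 0 < Q)
    (a b c : Fin N → F) (u v w : Fin Q → Fin N → F) (k : Fin Q → F)
    (hunsat : ¬ ((∀ i, a i * b i = c i) ∧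
      (∀ q, (∑ j, a j * u q j) + (∑ j, b j * v q j) + (∑ j, c j * w q j) = k q))) :
    {y : F | y ≠ 0 ∧
        ((∑ i : Fin N, (a i * b i - c i) * (y ^ ((i : ℤ) + 1) + y ^ (-((i : ℤ) + 1)))) +
          (∑ q : Fin Q, ((∑ j, a j * u q j) + (∑ j, b j * v q j) + (∑ j, c j * w q j) - k q) *
            y ^ ((q : ℤ) + 1 + (N : ℤ)))) = 0}.Finite ∧
    Set.ncard {y : F | y ≠ 0 ∧
        ((∑ i : Fin N, (a i * b i - c i) * (y ^ ((i : ℤ) + 1) + y ^ (-((i : ℤ) + 1)))) +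
          (∑ q : Fin Q, ((∑ j, a j * u q j) + (∑ j, b j * v q j) + (∑ j, c j * w q j) - k q) *
            y ^ ((q : ℤ) + 1 + (N : ℤ)))) = 0} ≤ 2 * N + Q := by
  classical
  set m : Fin N → F := fun i => a i * b i - c i with hm
  set L : Fin Q → F := fun q =>
    (∑ j, a j * u q j) + (∑ j, b j * v q j) + (∑ j, c j * w q j) - k q with hL
  set P : Polynomial F :=
    (∑ i : Fin N, C (m i) * (X ^ (N + (i : ℕ) + 1) + X ^ (N - ((i : ℕ) + 1)))) +
      ∑ q : Fin Q, C (L q) * X ^ (2 * N + (q : ℕ) + 1) with hP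
  have key : ∀ (d : F) (n p : ℕ), (C d * X ^ n).coeff p = if n = p then d else 0 := by
    intro d n p
    rw [coeff_C_mul, coeff_X_pow]
    split_ifs <;> simp_all
  -- coefficient computations
  have hcoeff1 : ∀ i₀ : Fin N, P.coeff (N + (i₀ : ℕ) + 1) = m i₀ := by
    intro i₀
    have hi₀ := i₀.is_lt
    rw [hP, coeff_add, Polynomial.finset_sum_coeff, Polynomial.finset_sum_coeff]
    have h1 : ∑ i : Fin N, (C (m i) * (X ^ (N + (i : ℕ) + 1) + X ^ (N - ((i : ℕ) + 1)))).coeff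
        (N + (i₀ : ℕ) + 1) = m i₀ := by
      rw [Finset.sum_eq_single i₀]
      · simp only [mul_add, coeff_add, key]
        rw [if_neg (by omega : ¬ (N - ((i₀ : ℕ) + 1) = N + (i₀ : ℕ) + 1)), add_zero]
        simp
      · intro i _ hne
        have hii : (i : ℕ) ≠ (i₀ : ℕ) := fun h => hne (Fin.ext h)
        simp only [mul_add, coeff_add, key]
        rw [if_neg (by omega), if_neg (by omega), add_zero]
      · intro h; exact absurd (Finset.mem_univ i₀) h
    have h2 : ∑ q : Fin Q, (C (L q) * X ^ (2 * N + (q : ℕ) + 1)).coeff (N + (i₀ : ℕ) + 1) = 0 := by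
      apply Finset.sum_eq_zero
      intro q _
      rw [key, if_neg (by omega)]
    rw [h1, h2, add_zero]
  have hcoeff2 : ∀ q₀ : Fin Q, P.coeff (2 * N + (q₀ : ℕ) + 1) = L q₀ := by
    intro q₀
    rw [hP, coeff_add, Polynomial.finset_sum_coeff, Polynomial.finset_sum_coeff]
    have h1 : ∑ i : Fin N, (C (m i) * (X ^ (N + (i : ℕ) + 1) + X ^ (N - ((i : ℕ) + 1)))).coeff
        (2 * N + (q₀ : ℕ) + 1) = 0 := by
      apply Finset.sum_eq_zero
      intro i _
      have hi := i.is_lt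
      simp only [mul_add, coeff_add, key]
      rw [if_neg (by omega), if_neg (by omega), add_zero]
    have h2 : ∑ q : Fin Q, (C (L q) * X ^ (2 * N + (q : ℕ) + 1)).coeff
        (2 * N + (q₀ : ℕ) + 1) = L q₀ := by
      rw [Finset.sum_eq_single q₀]
      · rw [key, if_pos rfl]
      · intro q _ hne
        have hqq : (q : ℕ) ≠ (q₀ : ℕ) := fun h => hne (Fin.ext h)
        rw [key, if_neg (by omega)]
      · intro h; exact absurd (Finset.mem_univ q₀) h
    rw [h1, h2, zero_add]
  have hPne : P ≠ 0 := by
    rw [not_and_or] at hunsat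
    rcases hunsat with h | h
    · push_neg at h
      obtain ⟨i₀, hi₀⟩ := h
      intro hc
      apply hi₀
      have := hcoeff1 i₀
      rw [hc, coeff_zero] at this
      have h0 : m i₀ = 0 := this.symm
      rw [hm] at h0
      exact sub_eq_zero.mp h0
    · push_neg at h
      obtain ⟨q₀, hq₀⟩ := h
      intro hc
      apply hq₀
      have := hcoeff2 q₀
      rw [hc, coeff_zero] at this
      have h0 : L q₀ = 0 := this.symm
      rw [hL] at h0
      exact sub_eq_zero.mp h0
  have hdeg : P.natDegree ≤ 2 * N + Q := by
    rw [hP]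
    apply le_trans (natDegree_add_le _ _)
    apply max_le
    · apply Polynomial.natDegree_sum_le_of_forall_le
      intro i _
      apply le_trans (natDegree_mul_le)
      apply le_trans (add_le_add (natDegree_C _).le (natDegree_add_le _ _))
      simp only [natDegree_X_pow, zero_add]
      have := i.is_lt
      apply max_le <;> omega
    · apply Polynomial.natDegree_sum_le_of_forall_le
      intro q _
      apply le_trans (natDegree_mul_le)
      simp only [natDegree_C, natDegree_X_pow, zero_add]
      have := q.is_lt
      omega
  have hsub : {y : F | y ≠ 0 ∧
        ((∑ i : Fin N, (a i * b i - c i) * (y ^ ((i : ℤ) + 1) + y ^ (-((i : ℤ) + 1)))) +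
          (∑ q : Fin Q, ((∑ j, a j * u q j) + (∑ j, b j * v q j) + (∑ j, c j * w q j) - k q) *
            y ^ ((q : ℤ) + 1 + (N : ℤ)))) = 0} ⊆ (P.roots.toFinset : Set F) := by
    rintro y ⟨hy0, hyeq⟩
    simp only [Finset.coe_sort_coe, Multiset.mem_toFinset, Finset.mem_coe,
      mem_roots hPne, IsRoot.def]
    have heval : P.eval y = y ^ N *
        ((∑ i : Fin N, m i * (y ^ ((i : ℤ) + 1) + y ^ (-((i : ℤ) + 1)))) +
          ∑ q : Fin Q, L q * y ^ ((q : ℤ) + 1 + (N : ℤ))) := by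
      rw [hP]
      simp only [eval_add, eval_finset_sum, eval_mul, eval_C, eval_pow, eval_X, mul_add,
        Finset.mul_sum]
      congr 1
      · apply Finset.sum_congr rfl
        intro i _
        have hle : (i : ℕ) + 1 ≤ N := i.is_lt
        have e1 : y ^ (N + (i : ℕ) + 1) = y ^ N * y ^ ((i : ℤ) + 1) := by
          have hc : ((N + (i : ℕ) + 1 : ℕ) : ℤ) = (N : ℤ) + ((i : ℤ) + 1) := by push_cast; ring
          rw [← zpow_natCast y (N + (i : ℕ) + 1), hc, zpow_add₀ hy0, zpow_natCast]
        have e2 : y ^ (N - ((i : ℕ) + 1)) = y ^ N * y ^ (-((i : ℤ) + 1)) := by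
          have hc : ((N - ((i : ℕ) + 1) : ℕ) : ℤ) = (N : ℤ) + (-((i : ℤ) + 1)) := by omega
          rw [← zpow_natCast y (N - ((i : ℕ) + 1)), hc, zpow_add₀ hy0, zpow_natCast]
        rw [e1, e2]; ring
      · apply Finset.sum_congr rfl
        intro q _
        have e3 : y ^ (2 * N + (q : ℕ) + 1) = y ^ N * y ^ ((q : ℤ) + 1 + (N : ℤ)) := by
          have hc : ((2 * N + (q : ℕ) + 1 : ℕ) : ℤ) = (N : ℤ) + ((q : ℤ) + 1 + (N : ℤ)) := by
            push_cast; ring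
          rw [← zpow_natCast y (2 * N + (q : ℕ) + 1), hc, zpow_add₀ hy0, zpow_natCast]
        rw [e3]; ring
    rw [heval, hyeq, mul_zero]
  constructor
  · exact Set.Finite.subset (P.roots.toFinset : Finset F).finite_toSet hsub
  · calc Set.ncard _ ≤ (P.roots.toFinset : Finset F).card := by
          rw [← Set.ncard_coe_finset]
          exact Set.ncard_le_ncard hsub (P.roots.toFinset : Finset F).finite_toSet
      _ ≤ Multiset.card P.roots := P.roots.toFinset_card_le
      _ ≤ P.natDegree := P.card_roots'
      _ ≤ 2 * N + Q := hdeg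
end

section
/- Let p be a prime with 2^k ≤ p for a positive integer k, and let w ∈ ZMod p (the field of integers modulo p). There exist b₁, …, b_k ∈ ZMod p with b_i·(b_i − 2^{i−1}) = 0 for every 1 ≤ i ≤ k and Σ_{i=1}^k b_i = w if and only if the canonical representative of w in {0, …, p−1} is strictly less than 2^k. -/
lemma bits_sum_aux : ∀ (k n : ℕ), n < 2 ^ k →
    ∑ i ∈ Finset.range k, n / 2 ^ i % 2 * 2 ^ i = n := by
  intro k
  induction k with
  | zero => intro n hn; interval_cases n; simp
  | succ k ih =>
    intro n hn
    rw [Finset.sum_range_succ']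
    have h2 : (n / 2) < 2 ^ k := by
      rw [Nat.div_lt_iff_lt_mul (by norm_num)]
      calc n < 2 ^ (k + 1) := hn
        _ = 2 ^ k * 2 := by ring
    have heq : ∀ i, n / 2 ^ (i + 1) % 2 * 2 ^ (i + 1) = 2 * (n / 2 / 2 ^ i % 2 * 2 ^ i) := by
      intro i
      rw [pow_succ', Nat.div_div_eq_div_mul]
      rw [← Nat.div_div_eq_div_mul]
      ring
    calc (∑ i ∈ Finset.range k, n / 2 ^ (i + 1) % 2 * 2 ^ (i + 1)) + n / 2 ^ 0 % 2 * 2 ^ 0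
        = (∑ i ∈ Finset.range k, 2 * (n / 2 / 2 ^ i % 2 * 2 ^ i)) + n % 2 := by
          simp [heq]
      _ = 2 * (n / 2) + n % 2 := by rw [← Finset.mul_sum, ih (n / 2) h2]
      _ = n := by omega

/-- Let `p` be a prime with `2^k ≤ p` for a positive integer `k`, and
`w ∈ ZMod p`.  There exist `b₁, …, b_k ∈ ZMod p` with `bᵢ·(bᵢ - 2^{i-1}) = 0` for each `i`
and `Σᵢ bᵢ = w` iff the canonical representative of `w` in `{0, …, p-1}` is `< 2^k`. -/
theorem range_constraint_system_zmod (p k : ℕ) (hp : p.Prime) (hk : 0 < k)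
    (hpk : 2 ^ k ≤ p) (w : ZMod p) :
    (∃ b : Fin k → ZMod p,
        (∀ i : Fin k, b i * (b i - 2 ^ (i : ℕ)) = 0) ∧ (∑ i, b i) = w) ↔
      w.val < 2 ^ k := by
  haveI : Fact p.Prime := ⟨hp⟩
  constructor
  · rintro ⟨b, hb, hsum⟩
    have hchoice : ∀ i : Fin k, ∃ c : ℕ, c ≤ 2 ^ (i : ℕ) ∧ (c : ZMod p) = b i := by
      intro i
      rcases mul_eq_zero.1 (hb i) with h | h
      · exact ⟨0, Nat.zero_le _, by simp [h]⟩
      · refine ⟨2 ^ (i : ℕ), le_refl _, ?_⟩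
        have := sub_eq_zero.1 h
        push_cast
        exact this.symm
    choose c hc1 hc2 using hchoice
    have hsum' : ((∑ i, c i : ℕ) : ZMod p) = w := by
      push_cast
      rw [← hsum]
      exact Finset.sum_congr rfl fun i _ => hc2 i
    have hlt : (∑ i, c i) < 2 ^ k := by
      calc (∑ i, c i) ≤ ∑ i : Fin k, 2 ^ (i : ℕ) :=
            Finset.sum_le_sum fun i _ => hc1 i
        _ = ∑ i ∈ Finset.range k, 2 ^ i := Fin.sum_univ_eq_sum_range _ _
        _ = 2 ^ k - 1 := by
            rw [Nat.geomSum_eq (le_refl 2) k]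
            simp
        _ < 2 ^ k := by have := Nat.one_le_two_pow (n := k); omega
    rw [← hsum', ZMod.val_cast_of_lt (lt_of_lt_of_le hlt hpk)]
    exact hlt
  · intro hw
    refine ⟨fun i => ((w.val / 2 ^ (i : ℕ) % 2 * 2 ^ (i : ℕ) : ℕ) : ZMod p), ?_, ?_⟩
    · intro i
      rcases Nat.mod_two_eq_zero_or_one (w.val / 2 ^ (i : ℕ)) with h | h
      · simp only [h]; simp
      · simp only [h]; push_cast; ring
    · have : (∑ i : Fin k, ((w.val / 2 ^ (i : ℕ) % 2 * 2 ^ (i : ℕ) : ℕ) : ZMod p))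
          = ((∑ i ∈ Finset.range k, w.val / 2 ^ i % 2 * 2 ^ i : ℕ) : ZMod p) := by
        rw [Fin.sum_univ_eq_sum_range (fun n => ((w.val / 2 ^ n % 2 * 2 ^ n : ℕ) : ZMod p)) k,
          Nat.cast_sum]
      rw [this, bits_sum_aux k w.val hw, ZMod.natCast_val, ZMod.cast_id]
end

section
/- Let F be a field, N, Q positive integers, witness vectors a, b, c ∈ F^N, public data u_q, v_q, w_q ∈ F^N, k_q ∈ F for q = 1,…,Q, and fix a nonzero y ∈ F. Define the univariate Laurent polynomials r₁[X] = Σ_{i=1}^N a_i X^i + Σ_{i=1}^N b_i X^{−i} + Σ_{i=1}^N c_i X^{−i−N}, r_y[X] = Σ_{i=1}^N a_i (yX)^i + Σ_{i=1}^N b_i (yX)^{−i} + Σ_{i=1}^N c_i (yX)^{−i−N}, and s_y[X] = Σ_{i=1}^N û_i(y) X^{−i} + Σ_{i=1}^N v̂_i(y) X^{i} + Σ_{i=1}^N ŵ_i(y) X^{i+N}, where û_i(y) = Σ_{q=1}^Q u_{q,i} y^{q+N}, v̂_i(y) = Σ_{q=1}^Q v_{q,i} y^{q+N}, ŵ_i(y)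 = −y^i − y^{−i} + Σ_{q=1}^Q w_{q,i} y^{q+N}, and k̂(y) = Σ_{q=1}^Q k_q y^{q+N}. Then the coefficient of X^0 in the Laurent polynomial t_y[X] := r₁[X]·(r_y[X] + s_y[X]) − k̂(y) equals 𝒞[y] = Σ_{i=1}^N (a_i b_i − c_i)(y^i + y^{−i}) + Σ_{q=1}^Q (a·u_q + b·v_q + c·w_q − k_q) y^{q+N}. -/
/-!
In `r₁ · (r_y + s_y)` every monomial of `r₁` meets every monomial of `r_y + s_y`, and a product
contributes to the constant term only when the two exponents cancel. The exponents of each block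
of monomials lie in one of the disjoint ranges `[1, N]`, `[-N, -1]`, `[-2N, -N-1]`, `[N+1, 2N]`,
so cancellation happens only between opposite ranges and there exactly on the diagonal `i = j`.
The surviving products are `aᵢbᵢyⁱ`, `aᵢbᵢy⁻ⁱ`, `aᵢûᵢ(y)`, `bᵢv̂ᵢ(y)` and `cᵢŵᵢ(y)`; exchanging
the sums over `i` and `q` and subtracting `k̂(y)` gives `𝒞[y]`.
-/

open LaurentPolynomial

/-- `r₁[X] = r[X,1] = Σᵢ aᵢ Xⁱ + Σᵢ bᵢ X⁻ⁱ + Σᵢ cᵢ X^{-i-N}` of the Sonic encoding. -/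
noncomputable def sonicR1 {F : Type*} [Field F] {N : ℕ} (a b c : Fin N → F) :
    LaurentPolynomial F :=
  (∑ i : Fin N, LaurentPolynomial.C (a i) * LaurentPolynomial.T ((i : ℤ) + 1)) +
  (∑ i : Fin N, LaurentPolynomial.C (b i) * LaurentPolynomial.T (-((i : ℤ) + 1))) +
  (∑ i : Fin N, LaurentPolynomial.C (c i) * LaurentPolynomial.T (-((i : ℤ) + 1) - (N : ℤ)))

/-- `r_y[X] = r[X,y] = Σᵢ aᵢ (yX)ⁱ + Σᵢ bᵢ (yX)⁻ⁱ + Σᵢ cᵢ (yX)^{-i-N}`. -/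
noncomputable def sonicRy {F : Type*} [Field F] {N : ℕ} (a b c : Fin N → F) (y : F) :
    LaurentPolynomial F :=
  (∑ i : Fin N, LaurentPolynomial.C (a i * y ^ ((i : ℤ) + 1)) *
      LaurentPolynomial.T ((i : ℤ) + 1)) +
  (∑ i : Fin N, LaurentPolynomial.C (b i * y ^ (-((i : ℤ) + 1))) *
      LaurentPolynomial.T (-((i : ℤ) + 1))) +
  (∑ i : Fin N, LaurentPolynomial.C (c i * y ^ (-((i : ℤ) + 1) - (N : ℤ))) *
      LaurentPolynomial.T (-((i : ℤ) + 1) - (N : ℤ)))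

/-- `s_y[X] = s[X,y] = Σᵢ ûᵢ(y) X⁻ⁱ + Σᵢ v̂ᵢ(y) Xⁱ + Σᵢ ŵᵢ(y) X^{i+N}` where
`ûᵢ(y) = Σ_q u_{q,i} y^{q+N}`, `v̂ᵢ(y) = Σ_q v_{q,i} y^{q+N}`,
`ŵᵢ(y) = -yⁱ - y⁻ⁱ + Σ_q w_{q,i} y^{q+N}`. -/
noncomputable def sonicSy {F : Type*} [Field F] {N Q : ℕ}
    (u v w : Fin Q → Fin N → F) (y : F) : LaurentPolynomial F :=
  (∑ i : Fin N, LaurentPolynomial.C (∑ q : Fin Q, u q i * y ^ ((q : ℤ) + 1 + (N : ℤ))) *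
      LaurentPolynomial.T (-((i : ℤ) + 1))) +
  (∑ i : Fin N, LaurentPolynomial.C (∑ q : Fin Q, v q i * y ^ ((q : ℤ) + 1 + (N : ℤ))) *
      LaurentPolynomial.T ((i : ℤ) + 1)) +
  (∑ i : Fin N, LaurentPolynomial.C (-y ^ ((i : ℤ) + 1) - y ^ (-((i : ℤ) + 1)) +
        ∑ q : Fin Q, w q i * y ^ ((q : ℤ) + 1 + (N : ℤ))) *
      LaurentPolynomial.T ((i : ℤ) + 1 + (N : ℤ)))

/-- `k̂(y) = Σ_q k_q y^{q+N}`. -/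
def sonicKhat {F : Type*} [Field F] {Q : ℕ} (N : ℕ) (k : Fin Q → F) (y : F) : F :=
  ∑ q : Fin Q, k q * y ^ ((q : ℤ) + 1 + (N : ℤ))

namespace LaurentPolynomial

variable {R : Type*} [CommSemiring R] {ι κ : Type*}

theorem coeff_C_mul_T (a : R) (n m : ℤ) :
    (C a * T n).coeff m = if n = m then a else 0 := by
  rw [← single_eq_C_mul_T, AddMonoidAlgebra.coeff_single, Finsupp.single_apply]

theorem coeff_sum_C_mul_T_mul_sum_C_mul_T (s : Finset ι) (t : Finset κ)
    (f : ι → R) (d : ι → ℤ) (g : κ → R) (e : κ → ℤ) (n : ℤ) :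
    ((∑ i ∈ s, C (f i) * T (d i)) * ∑ j ∈ t, C (g j) * T (e j)).coeff n =
      ∑ i ∈ s, ∑ j ∈ t, if d i + e j = n then f i * g j else 0 := by
  simp only [Finset.sum_mul_sum, AddMonoidAlgebra.coeff_sum, Finsupp.finsetSum_apply]
  refine Finset.sum_congr rfl fun i _ => Finset.sum_congr rfl fun j _ => ?_
  rw [mul_mul_mul_comm, ← map_mul, ← T_add, coeff_C_mul_T]

theorem coeff_zero_sum_C_mul_T_mul_sum_C_mul_T_of_add_eq_zero_iff (s : Finset ι)
    (f : ι → R) (d : ι → ℤ) (g : ι → R) (e : ι → ℤ)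
    (h : ∀ i ∈ s, ∀ j ∈ s, d i + e j = 0 ↔ i = j) :
    ((∑ i ∈ s, C (f i) * T (d i)) * ∑ j ∈ s, C (g j) * T (e j)).coeff 0 =
      ∑ i ∈ s, f i * g i := by
  classical
  rw [coeff_sum_C_mul_T_mul_sum_C_mul_T]
  refine Finset.sum_congr rfl fun i hi => ?_
  rw [Finset.sum_congr rfl fun j hj => if_congr (h i hi j hj) rfl rfl, Finset.sum_ite_eq,
    if_pos hi]

theorem coeff_zero_sum_C_mul_T_mul_sum_C_mul_T_of_add_ne_zero (s : Finset ι) (t : Finset κ)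
    (f : ι → R) (d : ι → ℤ) (g : κ → R) (e : κ → ℤ)
    (h : ∀ i ∈ s, ∀ j ∈ t, d i + e j ≠ 0) :
    ((∑ i ∈ s, C (f i) * T (d i)) * ∑ j ∈ t, C (g j) * T (e j)).coeff 0 = 0 := by
  rw [coeff_sum_C_mul_T_mul_sum_C_mul_T]
  exact Finset.sum_eq_zero fun i hi => Finset.sum_eq_zero fun j hj => if_neg (h i hi j hj)

end LaurentPolynomial

theorem sonic_constant_term_eq_constraint_eval_general (F : Type*) [Field F] (N Q : ℕ)
    (a b c : Fin N → F) (u v w : Fin Q → Fin N → F) (k : Fin Q → F)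
    (y : F) :
    (sonicR1 a b c * (sonicRy a b c y + sonicSy u v w y) -
        LaurentPolynomial.C (sonicKhat N k y)).coeff 0 =
      (∑ i : Fin N, (a i * b i - c i) * (y ^ ((i : ℤ) + 1) + y ^ (-((i : ℤ) + 1)))) +
      (∑ q : Fin Q, ((∑ j, a j * u q j) + (∑ j, b j * v q j) + (∑ j, c j * w q j) - k q) *
        y ^ ((q : ℤ) + 1 + (N : ℤ))) := by
  simp only [sonicR1, sonicRy, sonicSy, add_mul, mul_add, AddMonoidAlgebra.coeff_add,
    AddMonoidAlgebra.coeff_sub, Finsupp.add_apply, Finsupp.sub_apply]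
  -- Each of the 18 block products has exponents `d i + e j` that vanish iff `i = j` or never.
  simp (disch := intro i _ j _; first | (rw [Fin.ext_iff]; omega) | omega) only
    [coeff_zero_sum_C_mul_T_mul_sum_C_mul_T_of_add_eq_zero_iff,
     coeff_zero_sum_C_mul_T_mul_sum_C_mul_T_of_add_ne_zero]
  have sum_comm_mul : ∀ x : Fin N → F, ∀ M : Fin Q → Fin N → F,
      ∑ i, x i * ∑ q, M q i * y ^ ((q : ℤ) + 1 + N) =
        ∑ q, (∑ i, x i * M q i) * y ^ ((q : ℤ) + 1 + N) :=
    fun x M => Matrix.dotProduct_mulVec x (fun i q => M q i) _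
  simp only [sonicKhat, C_apply, if_pos, mul_add, mul_sub, add_mul, sub_mul, mul_neg,
    Finset.sum_add_distrib, Finset.sum_sub_distrib, Finset.sum_neg_distrib, add_zero, zero_add,
    sum_comm_mul, ← mul_assoc, mul_comm (b _) (a _)]
  ring

/-- The coefficient of `X^0` in
`t_y[X] = r₁[X]·(r_y[X] + s_y[X]) - k̂(y)` equals
`𝒞[y] = Σᵢ (aᵢbᵢ - cᵢ)(yⁱ + y⁻ⁱ) + Σ_q (a·u_q + b·v_q + c·w_q - k_q) y^{q+N}`. -/
theorem sonic_constant_term_eq_constraint_eval (F : Type*) [Field F] (N Q : ℕ)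
    (hN : 0 < N) (hQ : 0 < Q)
    (a b c : Fin N → F) (u v w : Fin Q → Fin N → F) (k : Fin Q → F)
    (y : F) (hy : y ≠ 0) :
    (sonicR1 a b c * (sonicRy a b c y + sonicSy u v w y) -
        LaurentPolynomial.C (sonicKhat N k y)).coeff 0 =
      (∑ i : Fin N, (a i * b i - c i) * (y ^ ((i : ℤ) + 1) + y ^ (-((i : ℤ) + 1)))) +
      (∑ q : Fin Q, ((∑ j, a j * u q j) + (∑ j, b j * v q j) + (∑ j, c j * w q j) - k q) *
        y ^ ((q : ℤ) + 1 + (N : ℤ))) :=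
  sonic_constant_term_eq_constraint_eval_general F N Q a b c u v w k y
end

section
/- Let F be a field, S ⊆ F a finite set, and for i = 1,…,K let S_i ⊆ S and f_i, γ_i ∈ F[X] with γ_i(z) = f_i(z) for all z ∈ S_i; let β, μ ∈ F. Define f̂[X] := Σ_{i=1}^K β^{i−1} Z_{S∖S_i}[X](f_i[X] − γ_i[X]), f̂_μ[X] := Σ_{i=1}^K β^{i−1} Z_{S∖S_i}(μ)(f_i[X] − γ_i(μ)), let p ∈ F[X] be the (exact) quotient of f̂ by Z_S, and let w_μ ∈ F[X] be the (exact) quotient of f̂_μ − f̂ by (X − μ). Then for every x ∈ F: w_μ(x)·(x − μ) = Σ_{i=1}^K β^{i−1} · Z_{S∖S_i}(μ) · (f_i(x) − γ_i(μ)) − p(x)·Z_S(x). (This identity, read in the exponents of the group elements π₁ = g^{p(x)}, π₂ = g^{w_μ(x)} and commitments F_i = g^{α f_i(x)}, is exactly what the single batched pairing equation of BatchVerify_rKZGb checks; it establishes the correctness of the batch verification scheme.) -/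
open Polynomial

/-- Let `γᵢ` agree with `fᵢ` on `Sᵢ ⊆ S`, let `p` be the exact quotient
of `f̂[X] = Σᵢ β^{i-1} Z_{S∖Sᵢ}[X](fᵢ[X] - γᵢ[X])` by `Z_S`, and let `w_μ` be the exact
quotient of `f̂_μ - f̂` by `X - μ`, where
`f̂_μ[X] = Σᵢ β^{i-1} Z_{S∖Sᵢ}(μ)(fᵢ[X] - γᵢ(μ))`.  Then for every `x ∈ F`:
`w_μ(x)·(x - μ) = Σᵢ β^{i-1} · Z_{S∖Sᵢ}(μ) · (fᵢ(x) - γᵢ(μ)) - p(x)·Z_S(x)`.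
This is the correctness identity of the batched pairing check of `BatchVerify_rKZGb`. -/
theorem batch_verification_identity (F : Type*) [Field F] [DecidableEq F]
    (S : Finset F) (K : ℕ) (Si : Fin K → Finset F) (hSi : ∀ i, Si i ⊆ S)
    (f γ : Fin K → Polynomial F)
    (hinterp : ∀ i, ∀ z ∈ Si i, (γ i).eval z = (f i).eval z)
    (β μ : F) (p wμ : Polynomial F)
    (hp : (∑ i : Fin K, C (β ^ (i : ℕ)) * (∏ z ∈ S \ Si i, (X - C z)) * (f i - γ i)) =
      (∏ z ∈ S, (X - C z)) * p)
    (hw : ((∑ i : Fin K, C (β ^ (i : ℕ) * (∏ z ∈ S \ Si i, (X - C z)).eval μ) *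
          (f i - C ((γ i).eval μ))) -
        ∑ i : Fin K, C (β ^ (i : ℕ)) * (∏ z ∈ S \ Si i, (X - C z)) * (f i - γ i)) =
      (X - C μ) * wμ) :
    ∀ x : F, wμ.eval x * (x - μ) =
      (∑ i : Fin K, β ^ (i : ℕ) * (∏ z ∈ S \ Si i, (X - C z)).eval μ *
        ((f i).eval x - (γ i).eval μ)) -
      p.eval x * (∏ z ∈ S, (X - C z)).eval x := by
  intro x
  have h1 := congrArg (eval x) hw
  rw [hp] at h1
  simp only [eval_sub, eval_mul, eval_finset_sum, eval_C, eval_X] at h1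
  rw [mul_comm (wμ.eval x) (x - μ), ← h1]
  ring
end

section
/- Let F be a finite field, K a positive integer, f_1, …, f_K ∈ F[X], and let Z ∈ F[X] be a product of distinct linear factors, Z[X] = ∏_{z∈S}(X − z) for a finite set S ⊆ F. Suppose that for some j ∈ {1,…,K} the polynomial f_j is not divisible by Z. Then the set { β ∈ F : Z divides Σ_{i=1}^K β^{i−1} f_i } has at most K − 1 elements. Equivalently, for β chosen uniformly at random from F, the probability that Z divides Σ_{i=1}^K β^{i−1} f_i is at most (K−1)/|F| < K/|F|, i.e., with probability at least 1 − K/|F| the combination Σ β^{i−1} f_i is also indivisible by Z. -/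
open Polynomial

/-- (Indivisibility lemma, Claim 4.6 of Plonk.)  Over a finite field `F`,
if `Z[X] = ∏_{z∈S}(X - z)` (distinct linear factors) does not divide some `f_j`, then the
set of `β ∈ F` for which `Z` divides `Σᵢ β^{i-1} fᵢ` has at most `K - 1` elements;
so a uniformly random `β` yields a combination divisible by `Z` with probability at most
`(K-1)/|F| < K/|F|`. -/
theorem random_combination_indivisible (F : Type*) [Field F] [Fintype F]
    [DecidableEq F] (K : ℕ) (hK : 0 < K) (f : Fin K → Polynomial F)
    (S : Finset F) (j : Fin K)
    (hj : ¬ (∏ z ∈ S, (X - C z)) ∣ f j) :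
    Set.ncard {β : F |
        (∏ z ∈ S, (X - C z)) ∣ ∑ i : Fin K, C (β ^ (i : ℕ)) * f i} ≤ K - 1 := by
  -- There is z₀ ∈ S with (f j).eval z₀ ≠ 0.
  have hex : ∃ z₀ ∈ S, (f j).eval z₀ ≠ 0 := by
    by_contra h
    push_neg at h
    apply hj
    apply Finset.prod_dvd_of_coprime
    · intro a ha b hb hab
      exact Polynomial.pairwise_coprime_X_sub_C Function.injective_id hab
    · intro z hz
      exact dvd_iff_isRoot.mpr (h z hz)
  obtain ⟨z₀, hz₀S, hz₀⟩ := hex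
  set P : Polynomial F := ∑ i : Fin K, C ((f i).eval z₀) * X ^ (i : ℕ) with hP
  have hPne : P ≠ 0 := by
    intro h
    apply hz₀
    have := congrArg (fun p => Polynomial.coeff p (j : ℕ)) h
    simp only [hP, Polynomial.finset_sum_coeff, Polynomial.coeff_C_mul,
      Polynomial.coeff_X_pow, Polynomial.coeff_zero] at this
    rw [Finset.sum_eq_single j] at this
    · simpa using this
    · intro b _ hb
      have : (b : ℕ) ≠ (j : ℕ) := fun hh => hb (Fin.ext hh)
      simp [Ne.symm this]
    · simp
  have hdeg : P.natDegree ≤ K - 1 := by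
    apply Polynomial.natDegree_sum_le_of_forall_le
    intro i _
    calc (C ((f i).eval z₀) * X ^ (i : ℕ)).natDegree ≤ (X ^ (i : ℕ) : Polynomial F).natDegree := by
          apply Polynomial.natDegree_C_mul_le _ _ |>.trans
          simp
      _ ≤ K - 1 := by
          rw [Polynomial.natDegree_X_pow]
          omega
  have hsub : {β : F | (∏ z ∈ S, (X - C z)) ∣ ∑ i : Fin K, C (β ^ (i : ℕ)) * f i}
      ⊆ ↑P.roots.toFinset := by
    intro β hβ
    simp only [Set.mem_setOf_eq] at hβ
    have hdvd : (X - C z₀) ∣ ∑ i : Fin K, C (β ^ (i : ℕ)) * f i :=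
      dvd_trans (Finset.dvd_prod_of_mem (fun z => X - C z) hz₀S) hβ
    have heval : (∑ i : Fin K, C (β ^ (i : ℕ)) * f i).eval z₀ = 0 :=
      (dvd_iff_isRoot.mp hdvd)
    simp only [Multiset.mem_toFinset, Finset.coe_sort_coe, Finset.mem_coe,
      Polynomial.mem_roots hPne]
    show P.eval β = 0
    rw [hP]
    simp only [Polynomial.eval_finset_sum, Polynomial.eval_mul, Polynomial.eval_C,
      Polynomial.eval_pow, Polynomial.eval_X]
    rw [Polynomial.eval_finset_sum] at heval
    simp only [Polynomial.eval_mul, Polynomial.eval_C] at heval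
    rw [← heval]
    exact Finset.sum_congr rfl fun i _ => mul_comm _ _
  calc Set.ncard {β : F | (∏ z ∈ S, (X - C z)) ∣ ∑ i : Fin K, C (β ^ (i : ℕ)) * f i}
      ≤ (P.roots.toFinset : Set F).ncard := Set.ncard_le_ncard hsub (Set.toFinite _)
    _ = P.roots.toFinset.card := by simp [Set.ncard_coe_finset]
    _ ≤ P.roots.card := Multiset.toFinset_card_le _
    _ ≤ P.natDegree := Polynomial.card_roots' P
    _ ≤ K - 1 := hdeg
end

section
/- Let F be a field, N, Q positive integers, witness vectors a, b, c ∈ F^N, public data u_q, v_q, w_q ∈ F^N, k_q ∈ F for q = 1,…,Q, and suppose the constraint system 𝒞 is NOT satisfied by (a,b,c). For each nonzero y ∈ F, let t_y[X] = r₁[X]·(r_y[X] + s_y[X]) − k̂(y) be the Sonic Laurent polynomial. Then the set of nonzero y ∈ F for which the coefficient of X^0 in t_y[X] is zero has at most 2N + Q elements. -/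
/-!
The constant coefficient of `t_y` is `𝒞[y] = Σ_j d_j y^{e_j}`, whose coefficients `d_j` are the
defects `a_i b_i - c_i` (at `y^{±i}`) and `a·u_q + b·v_q + c·w_q - k_q` (at `y^{q+N}`). These
exponents are distinct and lie in `[-N, N + Q]`, so for an unsatisfied system `y^N 𝒞[y]` is a
nonzero polynomial of degree at most `2N + Q`, which has at most that many roots.
-/

open LaurentPolynomial

theorem coeff_zero_sum_C_mul_T_mul_sum_C_mul_T {R ι κ : Type*} [Semiring R] [Fintype ι] [Fintype κ]
    (α : ι → R) (β : κ → R) (e : ι → ℤ) (f : κ → ℤ) :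
    ((∑ i, C (α i) * T (e i)) * (∑ j, C (β j) * T (f j)) : R[T;T⁻¹]).coeff 0
      = ∑ i, ∑ j, if e i + f j = 0 then α i * β j else 0 := by
  simp only [Finset.sum_mul_sum, ← single_eq_C_mul_T, AddMonoidAlgebra.single_mul_single,
    AddMonoidAlgebra.coeff_sum, Finsupp.finsetSum_apply, AddMonoidAlgebra.coeff_single,
    Finsupp.single_apply]

theorem sum_mul_sum_mul_comm {R ι κ : Type*} [Semiring R] [Fintype ι] [Fintype κ]
    (f : ι → R) (g : κ → ι → R) (z : κ → R) :
    ∑ i, f i * ∑ q, g q i * z q = ∑ q, (∑ i, f i * g q i) * z q := by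
  simp_rw [Finset.mul_sum, Finset.sum_mul, mul_assoc]
  exact Finset.sum_comm

section ZPowSum

variable {F ι : Type*} [Field F] [Fintype ι] (α : ι → F) (e : ι → ℤ) (m : ℕ)

/-- `X ^ m * Σ α i X ^ e i`; this is the intended polynomial only when every `e i ≥ -m`, since
`Int.toNat` truncates. -/
noncomputable def zpowSumShift : Polynomial F :=
  ∑ i, Polynomial.monomial (e i + m).toNat (α i)

variable {α e m}

theorem coeff_zpowSumShift (he : Function.Injective e) (hlo : ∀ i, -(m : ℤ) ≤ e i) (i : ι) :
    (zpowSumShift α e m).coeff (e i + m).toNat = α i := by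
  classical
  have hexp : ∀ j, (e j + m).toNat = (e i + m).toNat ↔ j = i := fun j => by
    rw [← he.eq_iff]; have := hlo i; have := hlo j; omega
  simp only [zpowSumShift, Polynomial.finsetSum_coeff, Polynomial.coeff_monomial, hexp]
  exact Fintype.sum_ite_eq' i α

theorem zpowSumShift_ne_zero (he : Function.Injective e) (hlo : ∀ i, -(m : ℤ) ≤ e i)
    (hα : α ≠ 0) : zpowSumShift α e m ≠ 0 := by
  obtain ⟨i, hi⟩ := Function.ne_iff.mp hα
  intro h
  exact hi (by rw [← coeff_zpowSumShift (α := α) he hlo i, h, Polynomial.coeff_zero, Pi.zero_apply])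

theorem natDegree_zpowSumShift_le {n : ℕ} (hhi : ∀ i, e i ≤ n) :
    (zpowSumShift α e m).natDegree ≤ m + n :=
  Polynomial.natDegree_sum_le_of_forall_le _ _ fun i _ =>
    (Polynomial.natDegree_monomial_le _).trans (by have := hhi i; omega)

theorem eval_zpowSumShift (hlo : ∀ i, -(m : ℤ) ≤ e i) {y : F} (hy : y ≠ 0) :
    (zpowSumShift α e m).eval y = y ^ m * ∑ i, α i * y ^ e i := by
  simp only [zpowSumShift, Polynomial.eval_finsetSum, Polynomial.eval_monomial, Finset.mul_sum]
  refine Finset.sum_congr rfl fun i _ => ?_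
  rw [← zpow_natCast, Int.toNat_of_nonneg (by linarith [hlo i]), zpow_add₀ hy, zpow_natCast]
  ring

theorem finite_and_ncard_le_of_sum_zpow {n : ℕ} (he : Function.Injective e)
    (hlo : ∀ i, -(m : ℤ) ≤ e i) (hhi : ∀ i, e i ≤ n) (hα : α ≠ 0) :
    {y : F | y ≠ 0 ∧ ∑ i, α i * y ^ e i = 0}.Finite ∧
      {y : F | y ≠ 0 ∧ ∑ i, α i * y ^ e i = 0}.ncard ≤ m + n := by
  set p := zpowSumShift α e m
  have hp : p ≠ 0 := zpowSumShift_ne_zero he hlo hα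
  have hsub : {y : F | y ≠ 0 ∧ ∑ i, α i * y ^ e i = 0} ⊆ p.rootSet F := by
    rintro y ⟨hy, hsum⟩
    rw [Polynomial.mem_rootSet_of_ne hp, Polynomial.coe_aeval_eq_eval, eval_zpowSumShift hlo hy,
      hsum, mul_zero]
  exact ⟨(p.rootSet_finite F).subset hsub,
    (Set.ncard_le_ncard hsub (p.rootSet_finite F)).trans <|
      (p.ncard_rootSet_le F).trans (natDegree_zpowSumShift_le hhi)⟩

end ZPowSum

section Sonic

variable {F : Type*} [Field F] {N Q : ℕ}

/-- `i : Fin N` and `q : Fin Q` stand for the paper's indices `i + 1` and `q + 1`. -/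
def sonicExponent (N Q : ℕ) : Fin N ⊕ Fin N ⊕ Fin Q → ℤ
  | .inl i => i + 1
  | .inr (.inl i) => -(i + 1)
  | .inr (.inr q) => q + 1 + N

def sonicDefect (a b c : Fin N → F) (u v w : Fin Q → Fin N → F) (k : Fin Q → F) :
    Fin N ⊕ Fin N ⊕ Fin Q → F
  | .inl i | .inr (.inl i) => a i * b i - c i
  | .inr (.inr q) => (∑ j, a j * u q j) + (∑ j, b j * v q j) + (∑ j, c j * w q j) - k q

theorem sonicExponent_injective : Function.Injective (sonicExponent N Q) := by
  rintro (i | i | q) (j | j | r) h <;>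
    simp only [sonicExponent, Sum.inl.injEq, Sum.inr.injEq, reduceCtorEq] at h ⊢ <;> omega

theorem neg_le_sonicExponent (j : Fin N ⊕ Fin N ⊕ Fin Q) : -(N : ℤ) ≤ sonicExponent N Q j := by
  rcases j with i | i | q <;> simp only [sonicExponent] <;> omega

theorem sonicExponent_le (j : Fin N ⊕ Fin N ⊕ Fin Q) : sonicExponent N Q j ≤ (N + Q : ℕ) := by
  rcases j with i | i | q <;> simp only [sonicExponent] <;> omega

theorem sonicDefect_ne_zero {a b c : Fin N → F} {u v w : Fin Q → Fin N → F} {k : Fin Q → F}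
    (hunsat : ¬ ((∀ i, a i * b i = c i) ∧
      (∀ q, (∑ j, a j * u q j) + (∑ j, b j * v q j) + (∑ j, c j * w q j) = k q))) :
    sonicDefect a b c u v w k ≠ 0 := by
  contrapose! hunsat
  exact ⟨fun i => sub_eq_zero.mp (congrFun hunsat (.inl i)),
    fun q => sub_eq_zero.mp (congrFun hunsat (.inr (.inr q)))⟩

theorem sonic_coeff_zero_eq (a b c : Fin N → F) (u v w : Fin Q → Fin N → F) (k : Fin Q → F)
    (y : F) :
    (sonicR1 a b c * (sonicRy a b c y + sonicSy u v w y) - C (sonicKhat N k y)).coeff 0 =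
      ∑ j, sonicDefect a b c u v w k j * y ^ sonicExponent N Q j := by
  have hdiag₁ : ∀ i j : Fin N, (i : ℤ) + 1 + -((j : ℤ) + 1) = 0 ↔ i = j := by omega
  have hdiag₂ : ∀ i j : Fin N, -((i : ℤ) + 1) + ((j : ℤ) + 1) = 0 ↔ i = j := by omega
  have hdiag₃ : ∀ i j : Fin N, -((i : ℤ) + 1) - N + ((j : ℤ) + 1 + N) = 0 ↔ i = j := by omega
  -- Of the 18 products of blocks, only three have exponents that can cancel; the others are ruled
  -- out by the ranges of the indices.
  simp only [sonicR1, sonicRy, sonicSy, mul_add, add_mul, AddMonoidAlgebra.coeff_sub,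
    AddMonoidAlgebra.coeff_add, Finsupp.add_apply, Finsupp.sub_apply,
    coeff_zero_sum_C_mul_T_mul_sum_C_mul_T]
  simp (disch := omega) only [if_neg, Finset.sum_const_zero, add_zero, zero_add]
  simp only [hdiag₁, hdiag₂, hdiag₃, Finset.sum_ite_eq, Finset.mem_univ, if_true, mul_sub, mul_neg,
    Finset.sum_add_distrib, sum_mul_sum_mul_comm]
  simp only [sonicKhat, C_apply, if_true, Fintype.sum_sum_type, sonicDefect, sonicExponent,
    Finset.sum_add_distrib, Finset.sum_sub_distrib, add_mul, sub_mul, Finset.sum_neg_distrib,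
    ← mul_assoc, mul_comm (b _) (a _)]
  abel

end Sonic

theorem sonic_zero_constant_term_soundness_general (F : Type*) [Field F] (N Q : ℕ)
    (a b c : Fin N → F) (u v w : Fin Q → Fin N → F) (k : Fin Q → F)
    (hunsat : ¬ ((∀ i, a i * b i = c i) ∧
      (∀ q, (∑ j, a j * u q j) + (∑ j, b j * v q j) + (∑ j, c j * w q j) = k q))) :
    {y : F | y ≠ 0 ∧
        (sonicR1 a b c * (sonicRy a b c y + sonicSy u v w y) -
          LaurentPolynomial.C (sonicKhat N k y)).coeff 0 = 0}.Finite ∧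
    Set.ncard {y : F | y ≠ 0 ∧
        (sonicR1 a b c * (sonicRy a b c y + sonicSy u v w y) -
          LaurentPolynomial.C (sonicKhat N k y)).coeff 0 = 0} ≤ 2 * N + Q := by
  simp only [sonic_coeff_zero_eq]
  obtain ⟨hfinite, hcard⟩ := finite_and_ncard_le_of_sum_zpow (m := N) (n := N + Q)
    sonicExponent_injective neg_le_sonicExponent sonicExponent_le (sonicDefect_ne_zero hunsat)
  exact ⟨hfinite, by omega⟩

/-- (Soundness of Sonic's zero-constant-term test.)
If the constraint system is NOT satisfied by `(a, b, c)`, then the set of nonzero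
`y ∈ F` for which the coefficient of `X^0` in
`t_y[X] = r₁[X]·(r_y[X] + s_y[X]) - k̂(y)` vanishes is finite, with at most
`2N + Q` elements. -/
theorem sonic_zero_constant_term_soundness (F : Type*) [Field F] (N Q : ℕ)
    (hN : 0 < N) (hQ : 0 < Q)
    (a b c : Fin N → F) (u v w : Fin Q → Fin N → F) (k : Fin Q → F)
    (hunsat : ¬ ((∀ i, a i * b i = c i) ∧
      (∀ q, (∑ j, a j * u q j) + (∑ j, b j * v q j) + (∑ j, c j * w q j) = k q))) :
    {y : F | y ≠ 0 ∧
        (sonicR1 a b c * (sonicRy a b c y + sonicSy u v w y) -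
          LaurentPolynomial.C (sonicKhat N k y)).coeff 0 = 0}.Finite ∧
    Set.ncard {y : F | y ≠ 0 ∧
        (sonicR1 a b c * (sonicRy a b c y + sonicSy u v w y) -
          LaurentPolynomial.C (sonicKhat N k y)).coeff 0 = 0} ≤ 2 * N + Q :=
  sonic_zero_constant_term_soundness_general F N Q a b c u v w k hunsat
end
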